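/- arXiv:1307.6501 — 2 statements merged into one kernel-verified Lean document; each statement's English description precedes it below -/
import Mathlib

section
/- Let U be nondecreasing with U ∈ ERV_γ for some γ < 0, i.e., (U(tλ)−U(t))/w(t) → h_γ(λ) for a positive function w. Set q := U ∘ exp. Then q(∞) := lim_{y→∞} q(y) is finite, and the ratio a_ξ(y) := [log|q(yξ²)−q(yξ)| − log|q(yξ)−q(y)|]/log ξ tends to −∞ as y → ∞, for any fixed ξ > 1. -/
/-!
Write `d t = U (t * 2) - U t`. The ERV limits at `λ = 2` and `λ = 4` give `d t / w t → h_γ(2) > 0`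
and `d (t * 2) / d t → 2 ^ γ < 1`, so beyond some `t₀` the increments of `U` over consecutive
dyadic blocks are positive and decay geometrically with a ratio `ρ < 1`. Summing the geometric
series bounds `U`, whence `q(∞) = sup U` exists and `q(∞) - U t ≤ d t / (1 - ρ)`.
Between `e ^ y` and `e ^ (y ξ)` lie `k ≈ y (ξ - 1) / log 2` dyadic blocks, so
`q(y ξ²) - q(y ξ) ≤ ρ ^ k d(e ^ y) / (1 - ρ)` while `q(y ξ) - q(y) ≥ d(e ^ y)`; hence
`a_ξ(y) ≤ (k log ρ - log (1 - ρ)) / log ξ → -∞`.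
-/

open Filter Real

noncomputable def h (ρ lam : ℝ) : ℝ := if ρ = 0 then Real.log lam else (lam ^ ρ - 1) / ρ

open Topology

def IsERV (U w : ℝ → ℝ) (γ : ℝ) : Prop :=
  ∀ l : ℝ, 0 < l → Tendsto (fun t => (U (t * l) - U t) / w t) atTop (𝓝 (h γ l))

lemma h_mul (ρ : ℝ) {a b : ℝ} (ha : 0 < a) (hb : 0 < b) :
    h ρ (a * b) = a ^ ρ * h ρ b + h ρ a := by
  unfold h
  split_ifs with hρ
  · rw [hρ, rpow_zero, one_mul, log_mul ha.ne' hb.ne', add_comm]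
  · rw [mul_rpow ha.le hb.le]
    field_simp
    ring

lemma h_pos (γ : ℝ) {l : ℝ} (hl : 1 < l) : 0 < h γ l := by
  unfold h
  split_ifs with hγ
  · exact log_pos hl
  · rcases lt_or_gt_of_ne hγ with hγ | hγ
    · exact div_pos_of_neg_of_neg (by linarith [rpow_lt_one_of_one_lt_of_neg hl hγ]) hγ
    · exact div_pos (by linarith [one_lt_rpow hl hγ]) hγ

lemma IsERV.tendsto_increment_div {U w : ℝ → ℝ} {γ l : ℝ} (hU : IsERV U w γ)
    (hw : ∀ t, 0 < w t) (hl : 1 < l) :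
    Tendsto (fun t => (U (t * l * l) - U (t * l)) / (U (t * l) - U t)) atTop (𝓝 (l ^ γ)) := by
  have hl₀ : 0 < l := by linarith
  have hl₁ := hU l hl₀
  have hl₂ := hU (l * l) (mul_pos hl₀ hl₀)
  rw [h_mul γ hl₀ hl₀] at hl₂
  have hquot := (hl₂.sub hl₁).div hl₁ (h_pos γ hl).ne'
  rw [add_sub_cancel_right, mul_div_cancel_right₀ _ (h_pos γ hl).ne'] at hquot
  refine hquot.congr fun t => ?_
  simp only [Pi.div_apply]
  rw [← sub_div, div_div_div_cancel_right₀ (hw t).ne', mul_assoc]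
  ring_nf

structure IncrementContraction (U : ℝ → ℝ) (l ρ t₀ : ℝ) : Prop where
  one_lt_scale : 1 < l
  threshold_pos : 0 < t₀
  ratio_pos : 0 < ρ
  ratio_lt_one : ρ < 1
  increment_pos : ∀ t, t₀ ≤ t → 0 < U (t * l) - U t
  increment_le : ∀ t, t₀ ≤ t → U (t * l * l) - U (t * l) ≤ ρ * (U (t * l) - U t)

lemma IsERV.exists_incrementContraction {U w : ℝ → ℝ} {γ l : ℝ} (hU : IsERV U w γ)
    (hw : ∀ t, 0 < w t) (hγ : γ < 0) (hl : 1 < l) :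
    ∃ ρ t₀, IncrementContraction U l ρ t₀ := by
  obtain ⟨ρ, hlρ, hρ⟩ := exists_between (rpow_lt_one_of_one_lt_of_neg hl hγ)
  have hpos : ∀ᶠ t in atTop, 0 < U (t * l) - U t := by
    filter_upwards [(hU l (by linarith)).eventually (eventually_gt_nhds (h_pos γ hl))] with t ht
    exact (div_pos_iff_of_pos_right (hw t)).mp ht
  have hdiv := (hU.tendsto_increment_div hw hl).eventually (eventually_lt_nhds hlρ)
  obtain ⟨t₁, ht₁⟩ := eventually_atTop.mp (hpos.and hdiv)
  refine ⟨ρ, max t₁ 1, hl, by positivity, (rpow_pos_of_pos (by linarith) γ).trans hlρ, hρ,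
    fun t ht => (ht₁ t (le_of_max_le_left ht)).1, fun t ht => ?_⟩
  obtain ⟨hd, hq⟩ := ht₁ t (le_of_max_le_left ht)
  exact ((div_lt_iff₀ hd).mp hq).le

lemma exp_mul_pow_floor_le {l ξ y a : ℝ} (hl : 1 < l) (hξ : 1 ≤ ξ) (hy : 0 ≤ y) (hya : y ≤ a) :
    exp a * l ^ ⌊y * (ξ - 1) / log l⌋₊ ≤ exp (a * ξ) := by
  have hlog := log_pos hl
  have hξ₁ : 0 ≤ ξ - 1 := by linarith
  have hpow : l ^ ⌊y * (ξ - 1) / log l⌋₊ ≤ exp (a * (ξ - 1)) := by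
    rw [← rpow_natCast, rpow_def_of_pos (by linarith)]
    refine exp_le_exp.mpr ?_
    calc log l * ⌊y * (ξ - 1) / log l⌋₊ ≤ log l * (y * (ξ - 1) / log l) := by
          gcongr
          exact Nat.floor_le (by positivity)
      _ = y * (ξ - 1) := by field_simp
      _ ≤ a * (ξ - 1) := by gcongr
  calc exp a * l ^ ⌊y * (ξ - 1) / log l⌋₊ ≤ exp a * exp (a * (ξ - 1)) := by gcongr
    _ = exp (a * ξ) := by rw [← exp_add]; ring_nf

namespace IncrementContraction

variable {U : ℝ → ℝ} {l ρ t₀ : ℝ}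

lemma le_mul_pow (hc : IncrementContraction U l ρ t₀) {t : ℝ} (ht : t₀ ≤ t) (k : ℕ) :
    t₀ ≤ t * l ^ k :=
  ht.trans <|
    le_mul_of_one_le_right (hc.threshold_pos.le.trans ht) (one_le_pow₀ hc.one_lt_scale.le)

lemma increment_pow_le (hc : IncrementContraction U l ρ t₀) {t : ℝ} (ht : t₀ ≤ t) (k : ℕ) :
    U (t * l ^ k * l) - U (t * l ^ k) ≤ ρ ^ k * (U (t * l) - U t) := by
  induction k with
  | zero => simp
  | succ k ih =>
    calc U (t * l ^ (k + 1) * l) - U (t * l ^ (k + 1))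
        = U (t * l ^ k * l * l) - U (t * l ^ k * l) := by rw [pow_succ, ← mul_assoc]
      _ ≤ ρ * (U (t * l ^ k * l) - U (t * l ^ k)) := hc.increment_le _ (hc.le_mul_pow ht k)
      _ ≤ ρ * (ρ ^ k * (U (t * l) - U t)) := by gcongr; exact hc.ratio_pos.le
      _ = ρ ^ (k + 1) * (U (t * l) - U t) := by ring

lemma sub_le (hc : IncrementContraction U l ρ t₀) {t : ℝ} (ht : t₀ ≤ t) (n : ℕ) :
    U (t * l ^ n) - U t ≤ (U (t * l) - U t) / (1 - ρ) := by
  have hd := (hc.increment_pos t ht).le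
  calc U (t * l ^ n) - U t = ∑ i ∈ Finset.range n, (U (t * l ^ (i + 1)) - U (t * l ^ i)) := by
        rw [Finset.sum_range_sub (fun i => U (t * l ^ i))]
        simp
    _ ≤ ∑ i ∈ Finset.range n, ρ ^ i * (U (t * l) - U t) := Finset.sum_le_sum fun i _ => by
        rw [pow_succ, ← mul_assoc]
        exact hc.increment_pow_le ht i
    _ = (∑ i ∈ Finset.Ico 0 n, ρ ^ i) * (U (t * l) - U t) := by
        rw [Finset.sum_mul, Finset.range_eq_Ico]
    _ ≤ ρ ^ 0 / (1 - ρ) * (U (t * l) - U t) := by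
        gcongr
        exact geom_sum_Ico_le_of_lt_one hc.ratio_pos.le hc.ratio_lt_one
    _ = (U (t * l) - U t) / (1 - ρ) := by ring

lemma bddAbove_range (hc : IncrementContraction U l ρ t₀) (hmono : Monotone U) :
    BddAbove (Set.range U) := by
  refine ⟨U t₀ + (U (t₀ * l) - U t₀) / (1 - ρ), ?_⟩
  rintro _ ⟨x, rfl⟩
  obtain ⟨n, hn⟩ := pow_unbounded_of_one_lt (x / t₀) hc.one_lt_scale
  have hx : x ≤ t₀ * l ^ n := ((div_lt_iff₀' hc.threshold_pos).mp hn).le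
  linarith [hmono hx, hc.sub_le le_rfl n]

lemma tendsto_ciSup (hc : IncrementContraction U l ρ t₀) (hmono : Monotone U) :
    Tendsto U atTop (𝓝 (⨆ x, U x)) :=
  tendsto_atTop_ciSup hmono (hc.bddAbove_range hmono)

lemma ciSup_sub_le (hc : IncrementContraction U l ρ t₀) (hmono : Monotone U) {t : ℝ}
    (ht : t₀ ≤ t) : (⨆ x, U x) - U t ≤ (U (t * l) - U t) / (1 - ρ) := by
  have hlim : Tendsto (fun n : ℕ => U (t * l ^ n)) atTop (𝓝 (⨆ x, U x)) :=
    (hc.tendsto_ciSup hmono).comp <| (tendsto_pow_atTop_atTop_of_one_lt hc.one_lt_scale)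
      |>.const_mul_atTop (hc.threshold_pos.trans_le ht)
  have : (⨆ x, U x) ≤ U t + (U (t * l) - U t) / (1 - ρ) :=
    le_of_tendsto hlim (Eventually.of_forall fun n => by linarith [hc.sub_le ht n])
  linarith

lemma sub_le_pow_mul_increment (hc : IncrementContraction U l ρ t₀) (hmono : Monotone U)
    {s u : ℝ} {k : ℕ} (hs : t₀ ≤ s) (hu : s * l ^ k ≤ u) (v : ℝ) :
    U v - U u ≤ ρ ^ k / (1 - ρ) * (U (s * l) - U s) :=
  calc U v - U u ≤ (⨆ x, U x) - U (s * l ^ k) :=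
        sub_le_sub (le_ciSup (hc.bddAbove_range hmono) v) (hmono hu)
    _ ≤ (U (s * l ^ k * l) - U (s * l ^ k)) / (1 - ρ) :=
        hc.ciSup_sub_le hmono (hc.le_mul_pow hs k)
    _ ≤ ρ ^ k * (U (s * l) - U s) / (1 - ρ) :=
        div_le_div_of_nonneg_right (hc.increment_pow_le hs k) (by linarith [hc.ratio_lt_one])
    _ = ρ ^ k / (1 - ρ) * (U (s * l) - U s) := by ring

lemma log_sub_sub_log_sub_le (hc : IncrementContraction U l ρ t₀) (hmono : Monotone U)
    {s u v : ℝ} {k : ℕ} (hs : t₀ ≤ s) (hk : 1 ≤ k) (hu : s * l ^ k ≤ u) (hv : u * l ^ k ≤ v) :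
    log |U v - U u| - log |U u - U s| ≤ k * log ρ - log (1 - ρ) := by
  have hl : l ≤ l ^ k := le_self_pow₀ hc.one_lt_scale.le (by omega)
  have hs₀ : 0 ≤ s := hc.threshold_pos.le.trans hs
  have hsl : s * l ≤ u := (mul_le_mul_of_nonneg_left hl hs₀).trans hu
  have hut : t₀ ≤ u := (hc.le_mul_pow hs k).trans hu
  have hul : u * l ≤ v := (mul_le_mul_of_nonneg_left hl (hc.threshold_pos.le.trans hut)).trans hv
  have hds := hc.increment_pos s hs
  have hB : U (s * l) - U s ≤ U u - U s := by linarith [hmono hsl]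
  have hA : 0 < U v - U u := (hc.increment_pos u hut).trans_le (by linarith [hmono hul])
  have hρ := hc.ratio_pos
  have h1ρ : 0 < 1 - ρ := by linarith [hc.ratio_lt_one]
  rw [abs_of_pos hA, abs_of_pos (hds.trans_le hB)]
  calc log (U v - U u) - log (U u - U s)
      ≤ log (ρ ^ k / (1 - ρ) * (U (s * l) - U s)) - log (U (s * l) - U s) := by
        gcongr
        exact hc.sub_le_pow_mul_increment hmono hs hu v
    _ = k * log ρ - log (1 - ρ) := by
        rw [log_mul (by positivity) hds.ne', log_div (by positivity) h1ρ.ne', log_pow]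
        ring

end IncrementContraction

theorem stmt7 (U w : ℝ → ℝ) (γ : ℝ) (hγ : γ < 0)
    (hmono : Monotone U)
    (hwpos : ∀ t, 0 < w t)
    (hERV : ∀ l : ℝ, 0 < l →
      Tendsto (fun t => (U (t * l) - U t) / w t) atTop (nhds (h γ l)))
    (ξ : ℝ) (hξ : 1 < ξ) :
    (∃ L : ℝ, Tendsto (fun y => U (Real.exp y)) atTop (nhds L)) ∧
    Tendsto
      (fun y =>
        (Real.log |U (Real.exp (y * ξ ^ (2 : ℕ))) - U (Real.exp (y * ξ))| -
            Real.log |U (Real.exp (y * ξ)) - U (Real.exp y)|) / Real.log ξ)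
      atTop atBot := by
  obtain ⟨ρ, t₀, hc⟩ := IsERV.exists_incrementContraction hERV hwpos hγ one_lt_two
  refine ⟨⟨_, (hc.tendsto_ciSup hmono).comp tendsto_exp_atTop⟩, ?_⟩
  set k : ℝ → ℕ := fun y => ⌊y * (ξ - 1) / log 2⌋₊
  have hk : Tendsto k atTop atTop := tendsto_nat_floor_atTop.comp <|
    (tendsto_id.atTop_mul_const (by linarith)).atTop_div_const (log_pos one_lt_two)
  have hbound : Tendsto (fun y => ((k y : ℝ) * log ρ - log (1 - ρ)) / log ξ) atTop atBot :=
    (tendsto_atBot_add_const_right _ _ <|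
      (tendsto_natCast_atTop_atTop.comp hk).atTop_mul_const_of_neg
        (log_neg hc.ratio_pos hc.ratio_lt_one)).atBot_div_const (log_pos hξ)
  refine tendsto_atBot_mono' _ ?_ hbound
  filter_upwards [eventually_ge_atTop 0, tendsto_exp_atTop.eventually_ge_atTop t₀,
    hk.eventually_ge_atTop 1] with y hy hyt₀ hk₁
  refine div_le_div_of_nonneg_right
    (hc.log_sub_sub_log_sub_le hmono hyt₀ hk₁ ?_ ?_) (log_pos hξ).le
  · exact exp_mul_pow_floor_le one_lt_two hξ.le hy le_rfl
  · rw [pow_two, ← mul_assoc]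
    exact exp_mul_pow_floor_le one_lt_two hξ.le hy (le_mul_of_one_le_right hy hξ.le)
end

section
/- Let q := U ∘ exp with U nondecreasing and eventually > 1, and suppose log q ∈ ERV_ρ(g): (log q(yλ) − log q(y))/g(y) → h_ρ(λ) locally uniformly in λ > 0. Let ρ̃(y) → ρ and g̃(y) ~ g(y) with g̃ positive. Define the penultimate log-GW approximation q̃ˡ_y(z) := q(y)·exp(g̃(y) h_{ρ̃(y)}(z/y)). Then for every Λ > 1, sup_{λ∈[1/Λ,Λ]} |(log q̃ˡ_y(yλ) − log q(yλ))/log q(y)| → 0 as y → ∞. -/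
open Filter Real

/-!
Write `L y = log U(eʸ)` and `Dᵧ(λ) = (L(yλ) - L y) / g y`. The error divided by `L y` equals
`(g y / L y) · ((g̃ y / g y) · h_{ρ̃ y}(λ) - Dᵧ(λ))`. Since `λ ↦ Dᵧ(λ)` is nondecreasing and
`h_ρ` is continuous, the pointwise ERV limit is uniform on compact `λ`-intervals (Pólya's
argument); the first term converges uniformly by joint continuity of `(c, a, λ) ↦ c · h_a(λ)`.
The factor `g / L` stays bounded because `L y ≥ L y - L(y/2) ≈ -h_ρ(1/2) · g y`.
-/

open Set Topology Function

lemma h_eq_log_mul_dslope_exp (a : ℝ) {l : ℝ} (hl : 0 < l) :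
    h a l = log l * dslope exp 0 (a * log l) := by
  rcases eq_or_ne (a * log l) 0 with hal | hal
  · rcases mul_eq_zero.1 hal with rfl | hlog
    · simp [h]
    · simp [h, Real.eq_one_of_pos_of_log_eq_zero hl hlog]
  · have ha : a ≠ 0 := left_ne_zero_of_mul hal
    rw [dslope_of_ne _ hal, slope_def_field, h, if_neg ha, rpow_def_of_pos hl, exp_zero,
      mul_comm (log l)]
    field_simp
    ring

lemma continuous_dslope_exp : Continuous (dslope exp 0) :=
  continuousOn_univ.1 <| (continuousOn_dslope univ_mem).2
    ⟨continuous_exp.continuousOn, differentiableAt_exp⟩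

lemma dslope_exp_pos (x : ℝ) : 0 < dslope exp 0 x := by
  rcases eq_or_ne x 0 with rfl | hx
  · simp
  · rw [dslope_of_ne _ hx, slope_def_field, exp_zero, sub_zero]
    rcases hx.lt_or_gt with hneg | hpos
    · exact div_pos_of_neg_of_neg (by linarith [exp_lt_one_iff.2 hneg]) hneg
    · exact div_pos (by linarith [one_lt_exp_iff.2 hpos]) hpos

lemma h_neg_of_lt_one {a l : ℝ} (hl0 : 0 < l) (hl1 : l < 1) : h a l < 0 := by
  rw [h_eq_log_mul_dslope_exp a hl0]
  exact mul_neg_of_neg_of_pos (log_neg hl0 hl1) (dslope_exp_pos _)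

lemma continuousOn_uncurry_h : ContinuousOn (uncurry h) (univ ×ˢ Ioi 0) := by
  have hcont : ContinuousOn (fun p : ℝ × ℝ => log p.2 * dslope exp 0 (p.1 * log p.2))
      (univ ×ˢ Ioi 0) := by
    have hlog : ContinuousOn (fun p : ℝ × ℝ => log p.2) (univ ×ˢ Ioi 0) :=
      continuousOn_log.comp continuous_snd.continuousOn fun p hp => (ne_of_gt hp.2)
    exact hlog.mul <|
      continuous_dslope_exp.comp_continuousOn (continuous_fst.continuousOn.mul hlog)
  exact hcont.congr fun p hp => h_eq_log_mul_dslope_exp p.1 hp.2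

lemma continuousOn_h (ρ : ℝ) : ContinuousOn (h ρ) (Ioi 0) :=
  continuousOn_uncurry_h.comp (f := fun l => (ρ, l)) (by fun_prop) fun _ hl => ⟨mem_univ ρ, hl⟩

lemma IsCompact.tendstoUniformlyOn_of_continuousOn_prod {X Y Z ι : Type*} [TopologicalSpace X]
    [TopologicalSpace Y] [UniformSpace Z] {F : X → Y → Z} {s : Set X} {k : Set Y}
    (hk : IsCompact k) (hF : ContinuousOn (uncurry F) (s ×ˢ k)) {q : X} (hq : q ∈ s)
    {p : Filter ι} {x : ι → X} (hx : Tendsto x p (𝓝[s] q)) :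
    TendstoUniformlyOn (fun i => F (x i)) (F q) p k := fun u hu => by
  obtain ⟨v, hv, hvu⟩ := hk.mem_uniformity_of_prod hF hq (symm_le_uniformity hu)
  exact eventually_of_mem (hx hv) fun i hi y hy => hvu _ hi y hy

lemma tendstoUniformlyOn_mul_h {ι : Type*} {p : Filter ι} {c ρt : ι → ℝ} {ρ a b : ℝ}
    (ha : 0 < a) (hc : Tendsto c p (𝓝 1)) (hρt : Tendsto ρt p (𝓝 ρ)) :
    TendstoUniformlyOn (fun i l => c i * h (ρt i) l) (h ρ) p (Icc a b) := by
  have hcont : ContinuousOn (uncurry fun (q : ℝ × ℝ) l => q.1 * h q.2 l) (univ ×ˢ Icc a b) :=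
    continuous_fst.fst.continuousOn.mul <| continuousOn_uncurry_h.comp
      (f := fun q : (ℝ × ℝ) × ℝ => (q.1.2, q.2)) (by fun_prop)
      fun q hq => ⟨mem_univ _, ha.trans_le hq.2.1⟩
  simpa using isCompact_Icc.tendstoUniformlyOn_of_continuousOn_prod hcont (mem_univ (1, ρ))
    (by simpa using hc.prodMk_nhds hρt)

lemma tendstoUniformlyOn_Icc_of_monotoneOn {ι : Type*} {p : Filter ι} {F : ι → ℝ → ℝ}
    {f : ℝ → ℝ} {a b : ℝ} (hf : ContinuousOn f (Icc a b))
    (hF : ∀ᶠ i in p, MonotoneOn (F i) (Icc a b))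
    (hlim : ∀ x ∈ Icc a b, Tendsto (fun i => F i x) p (𝓝 (f x))) :
    TendstoUniformlyOn F f p (Icc a b) := by
  rw [← tendstoLocallyUniformlyOn_iff_tendstoUniformlyOn_of_compact isCompact_Icc,
    Metric.tendstoLocallyUniformlyOn_iff]
  intro ε hε x hx
  obtain ⟨δ, hδ, hfδ⟩ := Metric.continuousWithinAt_iff.1 (hf x hx) (ε / 3) (by positivity)
  set lo := max a (x - δ / 2)
  set hi := min b (x + δ / 2)
  have hlo : lo ∈ Icc a b := ⟨le_max_left _ _, max_le (hx.1.trans hx.2) (by linarith [hx.2])⟩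
  have hhi : hi ∈ Icc a b := ⟨le_min (hx.1.trans hx.2) (by linarith [hx.1]), min_le_left _ _⟩
  have hnear : ∀ y ∈ Icc lo hi, y ∈ Icc a b ∧ dist (f y) (f x) < ε / 3 := by
    intro y hy
    have hya : y ∈ Icc a b := ⟨(le_max_left _ _).trans hy.1, hy.2.trans (min_le_left _ _)⟩
    refine ⟨hya, hfδ hya ?_⟩
    rw [Real.dist_eq, abs_lt]
    constructor <;> linarith [le_max_right a (x - δ / 2), min_le_right b (x + δ / 2), hy.1, hy.2]
  refine ⟨Icc lo hi, ?_, ?_⟩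
  · refine mem_nhdsWithin.2 ⟨Metric.ball x (δ / 2), Metric.isOpen_ball, Metric.mem_ball_self
      (by positivity), fun y ⟨hy, hya⟩ => ?_⟩
    rw [Metric.mem_ball, Real.dist_eq, abs_lt] at hy
    exact ⟨max_le hya.1 (by linarith), le_min hya.2 (by linarith)⟩
  · have hlo_lim := Metric.tendsto_nhds.1 (hlim lo hlo) (ε / 3) (by positivity)
    have hhi_lim := Metric.tendsto_nhds.1 (hlim hi hhi) (ε / 3) (by positivity)
    filter_upwards [hF, hlo_lim, hhi_lim] with i hmono hFlo hFhi y hy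
    obtain ⟨hya, hfy⟩ := hnear y hy
    have hflo := (hnear lo ⟨le_rfl, hy.1.trans hy.2⟩).2
    have hfhi := (hnear hi ⟨hy.1.trans hy.2, le_rfl⟩).2
    have h1 := hmono hlo hya hy.1
    have h2 := hmono hya hhi hy.2
    rw [Real.dist_eq, abs_lt] at *
    constructor <;> linarith

lemma TendstoUniformlyOn.mul_zero_of_bounded {ι α : Type*} {p : Filter ι} {s : Set α}
    {F : ι → α → ℝ} {c : ι → ℝ} {C : ℝ} (hF : TendstoUniformlyOn F 0 p s)
    (hc : ∀ᶠ i in p, |c i| ≤ C) : TendstoUniformlyOn (fun i x => c i * F i x) 0 p s := by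
  rw [Metric.tendstoUniformlyOn_iff] at hF ⊢
  intro ε hε
  filter_upwards [hF (ε / (|C| + 1)) (by positivity), hc] with i hFi hci x hx
  have hFx := hFi x hx
  simp only [Pi.zero_apply, dist_zero_left, Real.norm_eq_abs, abs_mul] at hFx ⊢
  calc |c i| * |F i x| ≤ |C| * (ε / (|C| + 1)) :=
        mul_le_mul (hci.trans (le_abs_self C)) hFx.le (abs_nonneg _) (abs_nonneg _)
    _ < ε := by
        rw [mul_div_assoc', div_lt_iff₀ (by positivity)]
        nlinarith [abs_nonneg C]

lemma eventually_abs_div_le_of_tendsto_neg {ι : Type*} {p : Filter ι} {L L' g : ι → ℝ}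
    {c : ℝ} (hc : c < 0) (hg : ∀ᶠ i in p, 0 < g i) (hL' : ∀ᶠ i in p, 0 ≤ L' i)
    (hlim : Tendsto (fun i => (L' i - L i) / g i) p (𝓝 c)) :
    ∀ᶠ i in p, |g i / L i| ≤ 2 / -c := by
  filter_upwards [hg, hL', hlim.eventually_lt_const (by linarith : c < c / 2)]
    with i hgi hL'i hi
  rw [div_lt_iff₀ hgi] at hi
  have hLi : 0 < L i := by nlinarith
  rw [abs_of_pos (div_pos hgi hLi), div_le_div_iff₀ hLi (neg_pos.2 hc)]
  linarith

lemma monotoneOn_log_comp_exp_mul {U : ℝ → ℝ} (hmono : Monotone U) {y a b : ℝ} (hy : 0 < y)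
    (hUa : 1 < U (exp (y * a))) : MonotoneOn (fun l => log (U (exp (y * l)))) (Icc a b) :=
  fun _ hl _ _ hll' => log_le_log (one_pos.trans_le (hUa.le.trans
    (hmono (exp_le_exp.2 (mul_le_mul_of_nonneg_left hl.1 hy.le))))) <|
    hmono (exp_le_exp.2 (mul_le_mul_of_nonneg_left hll' hy.le))

lemma tendstoUniformlyOn_log_increment {U g f : ℝ → ℝ} (hmono : Monotone U)
    (hU1 : ∀ᶠ y in atTop, 1 < U (exp y)) (hg : ∀ y, 0 < g y) {a b : ℝ} (ha : 0 < a)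
    (hf : ContinuousOn f (Icc a b))
    (hlim : ∀ l ∈ Icc a b,
      Tendsto (fun y => (log (U (exp (y * l))) - log (U (exp y))) / g y) atTop (𝓝 (f l))) :
    TendstoUniformlyOn (fun y l => (log (U (exp (y * l))) - log (U (exp y))) / g y) f atTop
      (Icc a b) := by
  refine tendstoUniformlyOn_Icc_of_monotoneOn hf ?_ hlim
  filter_upwards [(tendsto_id.atTop_mul_const ha).eventually hU1, eventually_gt_atTop 0]
    with y hUy hy _ hl _ hl' hll'
  exact div_le_div_of_nonneg_right
    (sub_le_sub_right (monotoneOn_log_comp_exp_mul hmono hy hUy hl hl' hll') _) (hg y).le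

theorem stmt11_general (U g ρt gt : ℝ → ℝ) (ρ : ℝ)
    (hmono : Monotone U)
    (hU1 : ∀ᶠ y in atTop, 1 < U (Real.exp y))
    (hgpos : ∀ y, 0 < g y)
    (hERV : ∀ l : ℝ, 0 < l →
      Tendsto
        (fun y => (Real.log (U (Real.exp (y * l))) - Real.log (U (Real.exp y))) / g y)
        atTop (nhds (h ρ l)))
    (hρt : Tendsto ρt atTop (nhds ρ))
    (hgt : Tendsto (fun y => gt y / g y) atTop (nhds 1)) :
    ∀ Λ : ℝ, 1 < Λ → ∀ ε : ℝ, 0 < ε → ∀ᶠ y in atTop,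
      ∀ l ∈ Set.Icc Λ⁻¹ Λ,
        |(Real.log (U (Real.exp y) * Real.exp (gt y * h (ρt y) l)) -
            Real.log (U (Real.exp (y * l)))) / Real.log (U (Real.exp y))| < ε := by
  intro Λ hΛ ε hε
  have hΛinv : 0 < Λ⁻¹ := inv_pos.2 (by linarith)
  have hS : Icc Λ⁻¹ Λ ⊆ Ioi 0 := fun l hl => hΛinv.trans_le hl.1
  have hD := tendstoUniformlyOn_log_increment hmono hU1 hgpos hΛinv
    ((continuousOn_h ρ).mono hS) fun l hl => hERV l (hS hl)
  have hA := tendstoUniformlyOn_mul_h (a := Λ⁻¹) (b := Λ) hΛinv hgt hρt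
  have hhalf : ∀ᶠ y in atTop, 0 ≤ log (U (exp (y * 2⁻¹))) :=
    ((tendsto_id.atTop_mul_const (by norm_num)).eventually hU1).mono
      fun y hy => log_nonneg hy.le
  have hratio := eventually_abs_div_le_of_tendsto_neg (h_neg_of_lt_one (a := ρ) (by norm_num)
    (by norm_num)) (Eventually.of_forall hgpos) hhalf (hERV 2⁻¹ (by norm_num))
  have herror := Metric.tendstoUniformlyOn_iff.1
    ((sub_self (h ρ) ▸ hA.sub hD).mul_zero_of_bounded hratio) ε hε
  filter_upwards [herror, hU1] with y hy hUy l hl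
  have hgy : g y ≠ 0 := (hgpos y).ne'
  have hrewrite : (log (U (exp y) * exp (gt y * h (ρt y) l)) - log (U (exp (y * l)))) /
      log (U (exp y)) = g y / log (U (exp y)) * (gt y / g y * h (ρt y) l -
        (log (U (exp (y * l))) - log (U (exp y))) / g y) := by
    rw [log_mul (one_pos.trans hUy).ne' (exp_ne_zero _), log_exp]
    field_simp
    ring
  simpa only [hrewrite, Pi.sub_apply, Pi.zero_apply, dist_zero_left, Real.norm_eq_abs]
    using hy l hl

theorem stmt11 (U g ρt gt : ℝ → ℝ) (ρ : ℝ)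
    (hmono : Monotone U)
    (hU1 : ∀ᶠ y in atTop, 1 < U (Real.exp y))
    (hgpos : ∀ y, 0 < g y) (hgtpos : ∀ y, 0 < gt y)
    (hERV : ∀ l : ℝ, 0 < l →
      Tendsto
        (fun y => (Real.log (U (Real.exp (y * l))) - Real.log (U (Real.exp y))) / g y)
        atTop (nhds (h ρ l)))
    (hρt : Tendsto ρt atTop (nhds ρ))
    (hgt : Tendsto (fun y => gt y / g y) atTop (nhds 1)) :
    ∀ Λ : ℝ, 1 < Λ → ∀ ε : ℝ, 0 < ε → ∀ᶠ y in atTop,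
      ∀ l ∈ Set.Icc Λ⁻¹ Λ,
        |(Real.log (U (Real.exp y) * Real.exp (gt y * h (ρt y) l)) -
            Real.log (U (Real.exp (y * l)))) / Real.log (U (Real.exp y))| < ε :=
  stmt11_general U g ρt gt ρ hmono hU1 hgpos hERV hρt hgt
end
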